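/- arXiv:0901.4444 — 5 statements merged into one kernel-verified Lean document; each statement's English description precedes it below -/
import Mathlib

section
/- For W distributed as beta(1,θ), i.e. with density θ(1-x)^(θ-1) on (0,1), the decrement matrix is q(n:m) = C(n,m) (θ)_(n-m) m! / ((θ+1)_(n-1) n), and the product formula p°(λ_1,...,λ_k) = ∏_{j=1}^k q(Λ_j : λ_j) with Λ_j = λ_j + ... + λ_k simplifies to p°(λ_1,...,λ_k) = θ^k n! / ((θ)_n ∏_{j=1}^k Λ_j), where n = λ_1+...+λ_k. -/
/-!
The beta`(1,θ)` moments `θ ∫ x^m (1-x)^(k+θ-1) dx` are Beta integrals, equal to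
`θ m! / (θ+k)_(m+1)`; with `m = 0` they give the normaliser `∫ (1-(1-x)^n) ν(dx) = n/(θ+n)`, and
the decrement matrix follows. Writing `g(n) = n!/(θ)_n`, one has `q(n:m) = θ g(n) / (g(n-m) n)`,
so along the tail sums `Λ_j - λ_j = Λ_(j+1)` the product telescopes to `θ^k g(n) / ∏ Λ_j`.
-/

open MeasureTheory

/-- Rising factorial `(z)_k = z (z+1) ⋯ (z+k-1)`. -/
noncomputable def rpoch (z : ℝ) (k : ℕ) : ℝ := ∏ i ∈ Finset.range k, (z + i)

open scoped Nat

theorem rpoch_pos {z : ℝ} (hz : 0 < z) (k : ℕ) : 0 < rpoch z k :=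
  Finset.prod_pos fun i _ => by positivity

theorem rpoch_zero (z : ℝ) : rpoch z 0 = 1 := Finset.prod_range_zero _

theorem rpoch_one (z : ℝ) : rpoch z 1 = z := by simp [rpoch]

theorem rpoch_succ (z : ℝ) (k : ℕ) : rpoch z (k + 1) = rpoch z k * (z + k) :=
  Finset.prod_range_succ _ _

theorem rpoch_succ' (z : ℝ) (k : ℕ) : rpoch z (k + 1) = z * rpoch (z + 1) k := by
  rw [rpoch, Finset.prod_range_succ', mul_comm]
  simp only [rpoch, Nat.cast_add, Nat.cast_one, Nat.cast_zero, add_zero, add_assoc, add_comm (1 : ℝ)]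

theorem rpoch_add (z : ℝ) (a b : ℕ) : rpoch z (a + b) = rpoch z a * rpoch (z + a) b := by
  simp only [rpoch, Finset.prod_range_add, Nat.cast_add, add_assoc]

-- The Beta integral `B(p+1, s+1)`.
theorem integral_Ioo_pow_mul_one_sub_rpow (p : ℕ) {s : ℝ} (hs : -1 < s) :
    ∫ x in Set.Ioo (0 : ℝ) 1, x ^ p * (1 - x) ^ s = p ! / rpoch (s + 1) (p + 1) := by
  have hbeta := Complex.betaIntegral_eval_nat_add_one_right (u := (s : ℂ) + 1)
    (by simp only [Complex.add_re, Complex.ofReal_re, Complex.one_re]; linarith) p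
  rw [Complex.betaIntegral_symm] at hbeta
  apply Complex.ofReal_injective
  rw [← integral_Ioc_eq_integral_Ioo, ← intervalIntegral.integral_of_le zero_le_one,
    ← intervalIntegral.integral_ofReal]
  push_cast [rpoch]
  rw [← hbeta, Complex.betaIntegral]
  refine intervalIntegral.integral_congr fun x hx => ?_
  rw [Set.uIcc_of_le zero_le_one] at hx
  simp only [add_sub_cancel_right]
  rw [Complex.cpow_natCast, Complex.ofReal_cpow (by linarith [hx.2])]
  push_cast
  ring

theorem integral_Ioo_pow_mul_one_sub_pow_mul_betaOneDensity {θ : ℝ} (hθ : 0 < θ) (m k : ℕ) :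
    ∫ x in Set.Ioo (0 : ℝ) 1, x ^ m * (1 - x) ^ k * (θ * (1 - x) ^ (θ - 1)) =
      θ * m ! / rpoch (θ + k) (m + 1) := by
  have hs : -1 < (k : ℝ) + θ - 1 := by linarith [k.cast_nonneg (α := ℝ)]
  rw [setIntegral_congr_fun measurableSet_Ioo
      (g := fun x => θ * (x ^ m * (1 - x) ^ ((k : ℝ) + θ - 1))) fun x hx => ?_,
    integral_const_mul, integral_Ioo_pow_mul_one_sub_rpow m hs, mul_div_assoc]
  · rw [show (k : ℝ) + θ - 1 + 1 = θ + k by ring]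
  · have hx1 : 0 < 1 - x := by linarith [hx.2]
    simp only
    rw [add_sub_assoc, Real.rpow_add hx1, Real.rpow_natCast]
    ring

theorem integral_Ioo_one_sub_one_sub_pow_mul_betaOneDensity {θ : ℝ} (hθ : 0 < θ) (n : ℕ) :
    ∫ x in Set.Ioo (0 : ℝ) 1, (1 - (1 - x) ^ n) * (θ * (1 - x) ^ (θ - 1)) = n / (θ + n) := by
  have hmoment := integral_Ioo_pow_mul_one_sub_pow_mul_betaOneDensity hθ 0
  have hint : ∀ k : ℕ, IntegrableOn (fun x => x ^ 0 * (1 - x) ^ k * (θ * (1 - x) ^ (θ - 1)))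
      (Set.Ioo 0 1) := fun k =>
    Integrable.of_integral_ne_zero <| by rw [hmoment, zero_add, rpoch_one]; positivity
  calc _ = ∫ x in Set.Ioo (0 : ℝ) 1, (x ^ 0 * (1 - x) ^ 0 * (θ * (1 - x) ^ (θ - 1)) -
        x ^ 0 * (1 - x) ^ n * (θ * (1 - x) ^ (θ - 1))) := by congr! 2 with x; ring
    _ = n / (θ + n) := by
      rw [integral_sub (hint 0) (hint n), hmoment, hmoment]
      have : 0 < θ + n := by positivity
      simp only [zero_add, rpoch_one, Nat.factorial_zero, Nat.cast_one, Nat.cast_zero, add_zero,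
        mul_one]
      field_simp
      ring

/-- The decrement matrix `q(n:m)` of beta`(1,θ)` stick-breaking. -/
noncomputable def ewensDecrement (θ : ℝ) (n m : ℕ) : ℝ :=
  (n.choose m : ℝ) * rpoch θ (n - m) * (m.factorial : ℝ) / (rpoch (θ + 1) (n - 1) * n)

theorem choose_mul_integral_div_integral_eq_ewensDecrement {θ : ℝ} (hθ : 0 < θ) {n m : ℕ} (hmn : m ≤ n) :
    (n.choose m : ℝ) *
        (∫ x in Set.Ioo (0 : ℝ) 1, x ^ m * (1 - x) ^ (n - m) * (θ * (1 - x) ^ (θ - 1))) /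
      (∫ x in Set.Ioo (0 : ℝ) 1, (1 - (1 - x) ^ n) * (θ * (1 - x) ^ (θ - 1))) =
    ewensDecrement θ n m := by
  rw [integral_Ioo_pow_mul_one_sub_pow_mul_betaOneDensity hθ,
    integral_Ioo_one_sub_one_sub_pow_mul_betaOneDensity hθ, ewensDecrement]
  rcases n with _ | n
  · simp
  have hkey : rpoch θ (n + 1 - m) * rpoch (θ + ↑(n + 1 - m)) (m + 1) =
      θ * rpoch (θ + 1) n * (θ + (n + 1)) := by
    rw [← rpoch_add, show n + 1 - m + (m + 1) = n + 1 + 1 by omega, rpoch_succ', rpoch_succ]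
    ring
  have hQ := rpoch_pos (z := θ + ↑(n + 1 - m)) (by positivity) (m + 1)
  have hR := rpoch_pos (z := θ + 1) (by positivity) n
  rw [add_tsub_cancel_right]
  field_simp
  push_cast
  linear_combination (-((n + 1).choose m : ℝ)) * hkey

theorem ewensDecrement_eq {θ : ℝ} (hθ : 0 < θ) {n m : ℕ} (hmn : m ≤ n) :
    ewensDecrement θ n m = θ * ((n ! / rpoch θ n) / ((n - m) ! / rpoch θ (n - m))) / n := by
  rw [ewensDecrement]
  rcases n with _ | n
  · simp
  have hfac : ((n + 1).choose m : ℝ) * m ! * (n + 1 - m) ! = (n + 1) ! := by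
    exact_mod_cast Nat.choose_mul_factorial_mul_factorial hmn
  have hP := rpoch_pos hθ (n + 1 - m)
  have hR := rpoch_pos (z := θ + 1) (by positivity) n
  rw [add_tsub_cancel_right, rpoch_succ' θ n]
  field_simp
  linear_combination hfac

-- Telescopes because `(l.drop i).sum - l.get i = (l.drop (i + 1)).sum`.
theorem prod_div_drop_sum_eq_div {G₀ : Type*} [CommGroupWithZero G₀] (g : ℕ → G₀)
    (hg : ∀ n, g n ≠ 0) (l : List ℕ) :
    ∏ i : Fin l.length, g (l.drop i).sum / g ((l.drop i).sum - l.get i) = g l.sum / g 0 := by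
  induction l with
  | nil => simp [hg 0]
  | cons a l ih =>
    simp only [List.length_cons]
    rw [Fin.prod_univ_succ]
    simp only [Fin.val_zero, List.drop_zero, List.get_eq_getElem,
      List.getElem_cons_zero, List.sum_cons, add_tsub_cancel_left, Fin.val_succ,
      List.drop_succ_cons, List.getElem_cons_succ]
    simp only [List.get_eq_getElem] at ih
    rw [ih, div_mul_div_cancel₀ (hg _)]

theorem prod_ewensDecrement {θ : ℝ} (hθ : 0 < θ) (l : List ℕ) :
    ∏ i : Fin l.length, ewensDecrement θ (l.drop i).sum (l.get i) =
      θ ^ l.length * (l.sum ! : ℝ) / (rpoch θ l.sum * ∏ i : Fin l.length, ((l.drop i).sum : ℝ)) := by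
  have hle (i : Fin l.length) : l.get i ≤ (l.drop i).sum := by
    rw [List.drop_eq_getElem_cons i.isLt, List.sum_cons]
    exact Nat.le_add_right _ _
  have htelescope := prod_div_drop_sum_eq_div (fun n => (n ! : ℝ) / rpoch θ n)
    (fun n => (div_pos (by positivity) (rpoch_pos hθ n)).ne') l
  simp only [Finset.prod_congr rfl fun i _ => ewensDecrement_eq hθ (hle i), Finset.prod_div_distrib,
    Finset.prod_mul_distrib, Finset.prod_const, Finset.card_univ, Fintype.card_fin, htelescope]
  rw [rpoch_zero, Nat.factorial_zero, Nat.cast_one, div_one]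
  ring

/-- For `W` distributed beta`(1,θ)` (density `θ(1-x)^(θ-1)` on `(0,1)`), the
stick-breaking decrement matrix is `q(n:m) = C(n,m)(θ)_(n-m) m! / ((θ+1)_(n-1) n)`,
and the product formula `p°(λ) = ∏_j q(Λ_j : λ_j)` (with tail sums
`Λ_j = λ_j + ⋯ + λ_k`) simplifies to `θ^k n! / ((θ)_n ∏_j Λ_j)`. -/
theorem ewens_decrement_and_product (θ : ℝ) (hθ : 0 < θ) :
    (∀ n m : ℕ, 1 ≤ m → m ≤ n →
      (n.choose m : ℝ) *
          (∫ x in Set.Ioo (0:ℝ) 1, x ^ m * (1 - x) ^ (n - m) * (θ * (1 - x) ^ (θ - 1))) /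
        (∫ x in Set.Ioo (0:ℝ) 1, (1 - (1 - x) ^ n) * (θ * (1 - x) ^ (θ - 1))) =
      (n.choose m : ℝ) * rpoch θ (n - m) * (m.factorial : ℝ) /
        (rpoch (θ + 1) (n - 1) * n)) ∧
    (∀ l : List ℕ, (∀ m ∈ l, 0 < m) → l ≠ [] →
      (∏ i : Fin l.length,
          ((((l.drop i).sum).choose (l.get i) : ℝ) * rpoch θ ((l.drop i).sum - l.get i) *
              ((l.get i).factorial : ℝ) /
            (rpoch (θ + 1) ((l.drop i).sum - 1) * ((l.drop i).sum : ℝ)))) =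
        θ ^ l.length * (l.sum.factorial : ℝ) /
          (rpoch θ l.sum * ∏ i : Fin l.length, ((l.drop i).sum : ℝ))) :=
  ⟨fun _ _ _ hmn => choose_mul_integral_div_integral_eq_ewensDecrement hθ hmn,
    fun l _ _ => prod_ewensDecrement hθ l⟩
end

section
/- The binomial moments Φ(n:m) of a Lévy measure satisfy the consistency identity Φ(n:m) = ((m+1)/(n+1)) Φ(n+1:m+1) + ((n−m+1)/(n+1)) Φ(n+1:m) for all 1 ≤ m ≤ n. -/
open MeasureTheory

/-- Binomial moment `Φ(n:m) = C(n,m) ∫ x^m (1-x)^(n-m) ν(dx) + 1(m=1) n d`. -/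
noncomputable def binomialMoment (ν : Measure ℝ) (d : ℝ) (n m : ℕ) : ℝ :=
  (n.choose m : ℝ) * (∫ x in Set.Ioc (0:ℝ) 1, x ^ m * (1 - x) ^ (n - m) ∂ν) +
    if m = 1 then (n : ℝ) * d else 0

lemma integrableOn_pow_aux (ν : Measure ℝ)
    (hint : IntegrableOn (fun x => x) (Set.Ioc 0 1) ν) (k j : ℕ) (hk : 1 ≤ k) :
    IntegrableOn (fun x : ℝ => x ^ k * (1 - x) ^ j) (Set.Ioc 0 1) ν := by
  refine Integrable.mono hint ?_ ?_
  · exact ((measurable_id.pow_const k).mul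
      ((measurable_const.sub measurable_id).pow_const j)).aestronglyMeasurable
  · filter_upwards [ae_restrict_mem measurableSet_Ioc] with x hx
    have hx0 : 0 ≤ x := hx.1.le
    have hx1 : x ≤ 1 := hx.2
    have h1 : (0:ℝ) ≤ (1 - x) ^ j := pow_nonneg (by linarith) j
    have h2 : (1 - x) ^ j ≤ 1 := pow_le_one₀ (by linarith) (by linarith)
    have h3 : x ^ k ≤ x := by
      calc x ^ k ≤ x ^ 1 := pow_le_pow_of_le_one hx0 hx1 hk
      _ = x := pow_one x
    have h4 : 0 ≤ x ^ k := pow_nonneg hx0 k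
    simp only [Real.norm_eq_abs, abs_of_nonneg hx0, abs_of_nonneg (mul_nonneg h4 h1)]
    calc x ^ k * (1 - x) ^ j ≤ x ^ k * 1 := by nlinarith
      _ ≤ x := by simpa using h3

/-- The binomial moments of a Lévy measure satisfy the consistency identity
`Φ(n:m) = ((m+1)/(n+1)) Φ(n+1:m+1) + ((n−m+1)/(n+1)) Φ(n+1:m)` for `1 ≤ m ≤ n`. -/
theorem binomialMoment_consistency (ν : Measure ℝ) (d : ℝ) (hd : 0 ≤ d)
    (hint : IntegrableOn (fun x => x) (Set.Ioc 0 1) ν)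
    (n m : ℕ) (hm : 1 ≤ m) (hmn : m ≤ n) :
    binomialMoment ν d n m =
      ((m : ℝ) + 1) / ((n : ℝ) + 1) * binomialMoment ν d (n + 1) (m + 1) +
        ((n : ℝ) - (m : ℝ) + 1) / ((n : ℝ) + 1) * binomialMoment ν d (n + 1) m := by
  have h1 : IntegrableOn (fun x : ℝ => x ^ (m + 1) * (1 - x) ^ (n - m)) (Set.Ioc 0 1) ν :=
    integrableOn_pow_aux ν hint _ _ (by omega)
  have h2 : IntegrableOn (fun x : ℝ => x ^ m * (1 - x) ^ (n - m + 1)) (Set.Ioc 0 1) ν :=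
    integrableOn_pow_aux ν hint _ _ hm
  have hsplit : ∫ x in Set.Ioc (0:ℝ) 1, x ^ m * (1 - x) ^ (n - m) ∂ν =
      (∫ x in Set.Ioc (0:ℝ) 1, x ^ (m + 1) * (1 - x) ^ (n - m) ∂ν) +
      (∫ x in Set.Ioc (0:ℝ) 1, x ^ m * (1 - x) ^ (n - m + 1) ∂ν) := by
    rw [← integral_add h1 h2]
    refine setIntegral_congr_fun measurableSet_Ioc fun x hx => ?_
    ring
  have hc1 : ((m : ℝ) + 1) * ((n + 1).choose (m + 1) : ℝ) = ((n : ℝ) + 1) * (n.choose m : ℝ) := by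
    have := congrArg (Nat.cast : ℕ → ℝ) (Nat.add_one_mul_choose_eq n m)
    push_cast at this
    linarith
  have hc2 : ((n : ℝ) - (m : ℝ) + 1) * ((n + 1).choose m : ℝ) =
      ((n : ℝ) + 1) * (n.choose m : ℝ) := by
    have h := congrArg (Nat.cast : ℕ → ℝ) (Nat.choose_succ_right_eq (n + 1) m)
    rw [Nat.cast_mul, Nat.cast_mul, Nat.cast_sub (by omega)] at h
    push_cast at h
    linarith [hc1, h]
  have hn1 : ((n : ℝ) + 1) ≠ 0 := by positivity
  unfold binomialMoment
  have hsub1 : n + 1 - (m + 1) = n - m := by omega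
  have hsub2 : n + 1 - m = n - m + 1 := by omega
  rw [hsub1, hsub2, hsplit]
  set I1 := ∫ x in Set.Ioc (0:ℝ) 1, x ^ (m + 1) * (1 - x) ^ (n - m) ∂ν with hI1
  set I2 := ∫ x in Set.Ioc (0:ℝ) 1, x ^ m * (1 - x) ^ (n - m + 1) ∂ν with hI2
  have hA : ((m : ℝ) + 1) / ((n : ℝ) + 1) * ((n + 1).choose (m + 1) : ℝ) = (n.choose m : ℝ) := by
    field_simp
    linarith [hc1]
  have hB : ((n : ℝ) - (m : ℝ) + 1) / ((n : ℝ) + 1) * ((n + 1).choose m : ℝ)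
      = (n.choose m : ℝ) := by
    field_simp
    linarith [hc2]
  by_cases hm1 : m = 1
  · subst hm1
    rw [if_pos rfl, if_neg (by norm_num : ¬(1 + 1 = 1))]
    push_cast
    have hE : ((n : ℝ) - 1 + 1) / ((n : ℝ) + 1) * (((n:ℝ) + 1) * d) = (n:ℝ) * d := by
      field_simp
      ring
    rw [add_zero, mul_add (((n:ℝ) - 1 + 1) / ((n : ℝ) + 1)), ← mul_assoc, ← mul_assoc]
    norm_num only at hA hB ⊢
    rw [hA, hB, hE, mul_add]
    ring
  · rw [if_neg hm1, if_neg (by omega : ¬(m + 1 = 1))]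
    simp only [if_neg hm1, add_zero]
    rw [← mul_assoc, ← mul_assoc, hA, hB]
    ring
end

section
/- The binomial moments can be expressed via iterated differences of the Laplace exponent: Φ(n:m) = C(n,m) ∑_{j=0}^m (−1)^{j+1} C(m,j) Φ(n−m+j) for all 1 ≤ m ≤ n, where Φ(ρ) = ρd + ∫_0^1 (1−(1−x)^ρ)ν(dx) and Φ(n:m) = C(n,m)∫_0^1 x^m (1−x)^{n−m} ν(dx) + 1(m=1)·n·d. -/
/-! The alternating sum is `(-1)^(m+1) Δ^m Φ (n-m)` for the forward difference `Δ` with step `1`.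
The difference is linear and commutes with the integral over `ν`. For `m ≥ 1` it sends `ρ ↦ ρ d`
to `d · 1(m=1)` and constants to `0`, while `ρ ↦ (1-x)^ρ` is an eigenfunction of `Δ` with
eigenvalue `-x`, so `Δ^m (ρ ↦ 1 - (1-x)^ρ) = -(-x)^m (1-x)^ρ`. -/

open MeasureTheory

/-- Laplace exponent `Φ(n) = n d + ∫ (1-(1-x)^n) ν(dx)` (so `Φ(0) = 0`). -/
noncomputable def laplaceExponent (ν : Measure ℝ) (d : ℝ) (n : ℕ) : ℝ :=
  (n : ℝ) * d + ∫ x in Set.Ioc (0:ℝ) 1, (1 - (1 - x) ^ n) ∂ν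

open Finset fwdDiff

section ForwardDifference

variable {R : Type*} [CommRing R]

theorem sum_range_neg_one_pow_succ_mul_choose_mul (f : ℕ → R) (m k : ℕ) :
    ∑ j ∈ range (m + 1), (-1 : R) ^ (j + 1) * (m.choose j : R) * f (k + j) =
      (-1) ^ (m + 1) * Δ_[1] ^[m] f k := by
  rw [fwdDiff_iter_eq_sum_shift, mul_sum]
  refine sum_congr rfl fun j hj => ?_
  have hjm : j + 1 + (m - j) = m + 1 := by have := mem_range.1 hj; omega
  have hsq : (-1 : R) ^ (m - j) * (-1) ^ (m - j) = 1 := by rw [← mul_pow]; simp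
  rw [← hjm, pow_add (-1 : R) (j + 1) (m - j), zsmul_eq_mul, smul_eq_mul, mul_one]
  push_cast
  linear_combination -(-1 : R) ^ (j + 1) * (m.choose j : R) * f (k + j) * hsq

theorem fwdDiff_iter_const_of_pos (c : R) {m : ℕ} (hm : 0 < m) :
    Δ_[1] ^[m] (fun _ : ℕ => c) = 0 := by
  obtain ⟨m, rfl⟩ := Nat.exists_eq_add_of_lt hm
  rw [zero_add, Function.iterate_succ_apply, fwdDiff_const]
  exact Function.iterate_fixed (fwdDiff_const 1 (0 : R)) m

theorem fwdDiff_iter_natCast_mul (c : R) {m : ℕ} (hm : 1 ≤ m) (k : ℕ) :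
    Δ_[1] ^[m] (fun n : ℕ => (n : R) * c) k = if m = 1 then c else 0 := by
  obtain ⟨m, rfl⟩ := Nat.exists_eq_add_of_le' hm
  have hΔ : Δ_[1] (fun n : ℕ => (n : R) * c) = fun _ => c := by
    ext n; simp only [fwdDiff, Nat.cast_add, Nat.cast_one]; ring
  rw [Function.iterate_succ_apply, hΔ]
  rcases Nat.eq_zero_or_pos m with rfl | hm
  · simp
  · simp [fwdDiff_iter_const_of_pos c hm, hm.ne']

theorem fwdDiff_iter_pow (r : R) (m : ℕ) :
    Δ_[1] ^[m] (fun n : ℕ => r ^ n) = (r - 1) ^ m • fun n : ℕ => r ^ n := by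
  induction m with
  | zero => simp
  | succ m ih =>
    have hΔ : Δ_[1] (fun n : ℕ => r ^ n) = (r - 1) • fun n : ℕ => r ^ n := by
      ext n; simp only [fwdDiff, pow_succ, Pi.smul_apply, smul_eq_mul]; ring
    rw [Function.iterate_succ_apply', ih, fwdDiff_const_smul, hΔ, smul_smul, pow_succ]

theorem fwdDiff_iter_one_sub_pow (r : R) {m : ℕ} (hm : 1 ≤ m) (k : ℕ) :
    Δ_[1] ^[m] (fun n : ℕ => 1 - r ^ n) k = -((r - 1) ^ m * r ^ k) := by
  have hsplit : (fun n : ℕ => 1 - r ^ n) = (fun _ => 1) + (-1 : R) • fun n : ℕ => r ^ n := by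
    ext n; simp [sub_eq_add_neg]
  rw [hsplit, fwdDiff_iter_add, fwdDiff_iter_const_smul, fwdDiff_iter_pow,
    fwdDiff_iter_const_of_pos 1 hm]
  simp

end ForwardDifference

theorem fwdDiff_iter_integral {M α E : Type*} [AddCommMonoid M] [MeasurableSpace α]
    [NormedAddCommGroup E] [NormedSpace ℝ E] {μ : Measure α} {F : M → α → E}
    (hF : ∀ y, Integrable (F y) μ) (h : M) (m : ℕ) (y : M) :
    Δ_[h] ^[m] (fun y => ∫ x, F y x ∂μ) y = ∫ x, Δ_[h] ^[m] (fun y => F y x) y ∂μ := by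
  simp_rw [fwdDiff_iter_eq_sum_shift, ← Int.cast_smul_eq_zsmul ℝ, ← integral_smul]
  exact (integral_finsetSum _ fun j _ => (hF _).smul _).symm

theorem abs_one_sub_one_sub_pow_le {x : ℝ} (hx₀ : 0 ≤ x) (hx₁ : x ≤ 1) (k : ℕ) :
    |1 - (1 - x) ^ k| ≤ k * x := by
  have hpow : (1 - x) ^ k ≤ 1 := pow_le_one₀ (by linarith) (by linarith)
  have hbernoulli := one_add_mul_le_pow (a := -x) (by linarith) k
  rw [← sub_eq_add_neg] at hbernoulli
  rw [abs_of_nonneg (by linarith)]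
  linarith

theorem integrableOn_one_sub_one_sub_pow {ν : Measure ℝ}
    (hint : IntegrableOn (fun x => x) (Set.Ioc 0 1) ν) (k : ℕ) :
    IntegrableOn (fun x => 1 - (1 - x) ^ k) (Set.Ioc 0 1) ν := by
  refine (hint.const_mul (k : ℝ)).mono' (by fun_prop) ?_
  filter_upwards [ae_restrict_mem measurableSet_Ioc] with x hx
  exact abs_one_sub_one_sub_pow_le hx.1.le hx.2 k

theorem neg_one_pow_succ_mul_fwdDiff_iter_laplaceExponent {ν : Measure ℝ} (d : ℝ)
    (hint : IntegrableOn (fun x => x) (Set.Ioc 0 1) ν) {m : ℕ} (hm : 1 ≤ m) (k : ℕ) :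
    (-1) ^ (m + 1) * Δ_[1] ^[m] (laplaceExponent ν d) k =
      (if m = 1 then d else 0) + ∫ x in Set.Ioc 0 1, x ^ m * (1 - x) ^ k ∂ν := by
  have hsplit : laplaceExponent ν d =
      (fun n : ℕ => (n : ℝ) * d) + fun n => ∫ x in Set.Ioc 0 1, (1 - (1 - x) ^ n) ∂ν := rfl
  rw [hsplit, fwdDiff_iter_add, Pi.add_apply, fwdDiff_iter_natCast_mul d hm,
    fwdDiff_iter_integral (integrableOn_one_sub_one_sub_pow hint)]
  simp_rw [fwdDiff_iter_one_sub_pow _ hm]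
  rw [mul_add, ← integral_const_mul]
  congr 1
  · split_ifs with h
    · subst h; norm_num
    · simp
  · congr 1 with x
    have hsq : (-1 : ℝ) ^ m * (-1) ^ m = 1 := by rw [← mul_pow]; simp
    rw [sub_sub_cancel_left, neg_pow, pow_succ]
    linear_combination x ^ m * (1 - x) ^ k * hsq

theorem binomialMoment_eq_iteratedDifference_general (ν : Measure ℝ) (d : ℝ)
    (hint : IntegrableOn (fun x => x) (Set.Ioc 0 1) ν)
    (n m : ℕ) (hm : 1 ≤ m) :
    binomialMoment ν d n m =
      (n.choose m : ℝ) * ∑ j ∈ Finset.range (m + 1),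
        (-1 : ℝ) ^ (j + 1) * (m.choose j : ℝ) * laplaceExponent ν d (n - m + j) := by
  rw [sum_range_neg_one_pow_succ_mul_choose_mul,
    neg_one_pow_succ_mul_fwdDiff_iter_laplaceExponent d hint hm, binomialMoment, mul_add]
  split_ifs with h
  · subst h; simp [add_comm]
  · simp

/-- The binomial moments are iterated differences of the Laplace exponent:
`Φ(n:m) = C(n,m) ∑_{j=0}^m (−1)^{j+1} C(m,j) Φ(n−m+j)` for `1 ≤ m ≤ n`. -/
theorem binomialMoment_eq_iteratedDifference (ν : Measure ℝ) (d : ℝ) (hd : 0 ≤ d)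
    (hint : IntegrableOn (fun x => x) (Set.Ioc 0 1) ν)
    (n m : ℕ) (hm : 1 ≤ m) (hmn : m ≤ n) :
    binomialMoment ν d n m =
      (n.choose m : ℝ) * ∑ j ∈ Finset.range (m + 1),
        (-1 : ℝ) ^ (j + 1) * (m.choose j : ℝ) * laplaceExponent ν d (n - m + j) :=
  binomialMoment_eq_iteratedDifference_general ν d hint n m hm
end

section
/- For the measure ν on (0,1] with tail ν[x,1] = x^(−α)(1−x)^θ, where 0 ≤ α < 1 and θ ≥ 0, the Laplace exponent is Φ(ρ) = ∫_0^1 (1−(1−x)^ρ) ν(dx) = ρ B(1−α, ρ+θ) = ρ Γ(1−α) Γ(ρ+θ) / Γ(ρ+1−α+θ). -/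
/-!
Since `1 - (1 - x) ^ ρ = ∫₀ˣ ρ (1 - t) ^ (ρ - 1) dt`, the layer cake formula turns the Laplace
exponent into `∫₀¹ ρ (1 - t) ^ (ρ - 1) ν[t, 1] dt = ρ ∫₀¹ t ^ (-α) (1 - t) ^ (ρ + θ - 1) dt`,
which is `ρ` times the beta function `B(1 - α, ρ + θ) = Γ(1 - α) Γ(ρ + θ) / Γ(ρ + 1 - α + θ)`.
-/

open MeasureTheory Set

theorem lintegral_intervalIntegral_eq_lintegral_measure_Icc (ν : Measure ℝ) {g : ℝ → ℝ} {b : ℝ}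
    (hg : Measurable g) (hg_int : IntegrableOn g (Ioc 0 b)) (hg_nn : ∀ t ∈ Ioc 0 b, 0 ≤ g t) :
    ∫⁻ x in Ioc 0 b, ENNReal.ofReal (∫ t in 0..x, g t) ∂ν =
      ∫⁻ t in Ioc 0 b, ν (Icc t b) * ENNReal.ofReal (g t) := by
  set h := (Iic b).indicator g
  have h_intervalIntegral : ∀ x ∈ Ioc 0 b, ∫ t in 0..x, g t = ∫ t in 0..max x 0, h t := by
    intro x hx
    rw [max_eq_left hx.1.le]
    refine intervalIntegral.integral_congr fun t ht => (indicator_of_mem ?_ g).symm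
    rw [uIcc_of_le hx.1.le] at ht
    exact ht.2.trans hx.2
  have h_intble : ∀ t > 0, IntervalIntegrable h volume 0 t := by
    intro t ht
    rw [intervalIntegrable_iff_integrableOn_Ioc_of_le ht.le, IntegrableOn,
      integrable_indicator_iff measurableSet_Iic, IntegrableOn,
      Measure.restrict_restrict measurableSet_Iic]
    exact hg_int.mono_set fun s hs => ⟨hs.2.1, hs.1⟩
  have h_nn : ∀ t > 0, 0 ≤ h t := fun t ht => indicator_apply_nonneg fun htb => hg_nn t ⟨ht, htb⟩
  have h_tail : ∀ t ∈ Ioc 0 b, ν.restrict (Ioc 0 b) {x | t ≤ max x 0} = ν (Icc t b) := by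
    intro t ht
    have h_Ici : {x : ℝ | t ≤ max x 0} = Ici t := by
      ext x
      simp [ht.1.not_ge]
    have h_Icc : Ici t ∩ Ioc 0 b = Icc t b := by
      ext x
      exact ⟨fun hx => ⟨hx.1, hx.2.2⟩, fun hx => ⟨hx.1, ht.1.trans_le hx.1, hx.2⟩⟩
    rw [h_Ici, Measure.restrict_apply measurableSet_Ici, h_Icc]
  calc ∫⁻ x in Ioc 0 b, ENNReal.ofReal (∫ t in 0..x, g t) ∂ν
      = ∫⁻ x in Ioc 0 b, ENNReal.ofReal (∫ t in 0..max x 0, h t) ∂ν :=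
        setLIntegral_congr_fun measurableSet_Ioc fun x hx => by rw [h_intervalIntegral x hx]
    _ = ∫⁻ t in Ioi 0, ν.restrict (Ioc 0 b) {x | t ≤ max x 0} * ENNReal.ofReal (h t) :=
        lintegral_comp_eq_lintegral_meas_le_mul_of_measurable _ (fun x => le_max_right x 0)
          (by fun_prop) h_intble (hg.indicator measurableSet_Iic) h_nn
    _ = ∫⁻ t in Ioi 0, (Iic b).indicator
          (fun t => ν.restrict (Ioc 0 b) {x | t ≤ max x 0} * ENNReal.ofReal (g t)) t := by
        congr 1 with t
        by_cases htb : t ∈ Iic b <;> simp [h, htb]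
    _ = ∫⁻ t in Ioc 0 b, ν (Icc t b) * ENNReal.ofReal (g t) := by
        rw [setLIntegral_indicator measurableSet_Iic, inter_comm, Ioi_inter_Iic]
        exact setLIntegral_congr_fun measurableSet_Ioc fun t ht => by rw [h_tail t ht]

theorem integral_mul_one_sub_rpow {ρ : ℝ} (hρ : 0 < ρ) (x : ℝ) :
    ∫ t in 0..x, ρ * (1 - t) ^ (ρ - 1) = 1 - (1 - x) ^ ρ := by
  rw [intervalIntegral.integral_const_mul,
    intervalIntegral.integral_comp_sub_left (fun u : ℝ => u ^ (ρ - 1)) 1,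
    integral_rpow (Or.inl (by linarith)), sub_add_cancel, sub_zero, Real.one_rpow]
  field_simp

theorem intervalIntegrable_mul_one_sub_rpow {ρ : ℝ} (hρ : 0 < ρ) (a b : ℝ) :
    IntervalIntegrable (fun t => ρ * (1 - t) ^ (ρ - 1)) volume a b := by
  have := (intervalIntegral.intervalIntegrable_rpow' (a := 1 - a) (b := 1 - b)
    (r := ρ - 1) (by linarith)).comp_sub_left 1
  simp only [sub_sub_cancel] at this
  exact this.const_mul ρ

theorem integral_one_sub_one_sub_rpow_eq_lintegral_measure_Icc (ν : Measure ℝ) {ρ : ℝ}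
    (hρ : 0 < ρ) :
    ∫ x in Ioc 0 1, (1 - (1 - x) ^ ρ) ∂ν =
      (∫⁻ t in Ioo 0 1, ν (Icc t 1) * ENNReal.ofReal (ρ * (1 - t) ^ (ρ - 1))).toReal := by
  have h_nn : ∀ x ∈ Ioc (0:ℝ) 1, 0 ≤ 1 - (1 - x) ^ ρ := fun x hx => by
    have : (1 - x) ^ ρ ≤ 1 := Real.rpow_le_one (by linarith [hx.2]) (by linarith [hx.1]) hρ.le
    linarith
  rw [integral_eq_lintegral_of_nonneg_ae ((ae_restrict_iff' measurableSet_Ioc).2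
      (.of_forall h_nn)) (Measurable.aestronglyMeasurable (by fun_prop)),
    Measure.restrict_congr_set Ioo_ae_eq_Ioc]
  simp_rw [← integral_mul_one_sub_rpow hρ]
  rw [lintegral_intervalIntegral_eq_lintegral_measure_Icc ν (by fun_prop)
    (intervalIntegrable_mul_one_sub_rpow hρ 0 1).1
    fun t ht => mul_nonneg hρ.le (Real.rpow_nonneg (by linarith [ht.2]) _)]

theorem lintegral_rpow_mul_one_sub_rpow {a b : ℝ} (ha : 0 < a) (hb : 0 < b) :
    ∫⁻ x in Ioo 0 1, ENNReal.ofReal (x ^ (a - 1) * (1 - x) ^ (b - 1)) =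
      ENNReal.ofReal (ProbabilityTheory.beta a b) := by
  have h := ProbabilityTheory.lintegral_betaPDF_eq_one ha hb
  have hB := ProbabilityTheory.beta_pos ha hb
  simp_rw [ProbabilityTheory.lintegral_betaPDF, mul_assoc,
    ENNReal.ofReal_mul (one_div_pos.2 hB).le] at h
  rw [lintegral_const_mul _ (by fun_prop), mul_comm] at h
  rw [ENNReal.eq_inv_of_mul_eq_one_left h, one_div, ENNReal.ofReal_inv_of_pos hB, inv_inv]

theorem twoParam_laplaceExponent_general (α θ ρ : ℝ) (hα1 : α < 1)
    (hθ : 0 ≤ θ) (hρ : 0 < ρ) (ν : Measure ℝ)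
    (hfin : ∀ x : ℝ, 0 < x → ν (Set.Icc x 1) ≠ ⊤)
    (htail : ∀ x : ℝ, 0 < x → x ≤ 1 →
      (ν (Set.Icc x 1)).toReal = x ^ (-α) * (1 - x) ^ θ) :
    ∫ x in Set.Ioc (0:ℝ) 1, (1 - (1 - x) ^ ρ) ∂ν =
      ρ * Real.Gamma (1 - α) * Real.Gamma (ρ + θ) / Real.Gamma (ρ + 1 - α + θ) := by
  have h_density : ∀ t ∈ Ioo (0:ℝ) 1, ν (Icc t 1) * ENNReal.ofReal (ρ * (1 - t) ^ (ρ - 1)) =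
      ENNReal.ofReal ρ * ENNReal.ofReal (t ^ ((1 - α) - 1) * (1 - t) ^ ((ρ + θ) - 1)) := by
    intro t ht
    have h1t : 0 < 1 - t := by linarith [ht.2]
    rw [← ENNReal.ofReal_toReal (hfin t ht.1), htail t ht.1 ht.2.le,
      ← ENNReal.ofReal_mul (mul_nonneg (Real.rpow_nonneg ht.1.le _) (Real.rpow_nonneg h1t.le _)),
      ← ENNReal.ofReal_mul hρ.le, show (ρ + θ) - 1 = θ + (ρ - 1) by ring, Real.rpow_add h1t,
      sub_sub_cancel_left]
    ring_nf
  have hβ : 0 < ProbabilityTheory.beta (1 - α) (ρ + θ) :=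
    ProbabilityTheory.beta_pos (by linarith) (by linarith)
  calc ∫ x in Ioc 0 1, (1 - (1 - x) ^ ρ) ∂ν
      = (∫⁻ t in Ioo 0 1, ENNReal.ofReal ρ *
          ENNReal.ofReal (t ^ ((1 - α) - 1) * (1 - t) ^ ((ρ + θ) - 1))).toReal := by
        rw [integral_one_sub_one_sub_rpow_eq_lintegral_measure_Icc ν hρ,
          setLIntegral_congr_fun measurableSet_Ioo h_density]
    _ = ρ * ProbabilityTheory.beta (1 - α) (ρ + θ) := by
        rw [lintegral_const_mul _ (by fun_prop), lintegral_rpow_mul_one_sub_rpow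
          (by linarith) (by linarith), ENNReal.toReal_mul, ENNReal.toReal_ofReal hρ.le,
          ENNReal.toReal_ofReal hβ.le]
    _ = ρ * Real.Gamma (1 - α) * Real.Gamma (ρ + θ) / Real.Gamma (ρ + 1 - α + θ) := by
        rw [ProbabilityTheory.beta, show 1 - α + (ρ + θ) = ρ + 1 - α + θ by ring]
        ring

/-- For the measure `ν` on `(0,1]` with tail `ν[x,1] = x^(−α) (1−x)^θ`
(`0 ≤ α < 1`, `θ ≥ 0`), the Laplace exponent is
`Φ(ρ) = ∫ (1−(1−x)^ρ) ν(dx) = ρ B(1−α, ρ+θ) = ρ Γ(1−α) Γ(ρ+θ)/Γ(ρ+1−α+θ)`. -/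
theorem twoParam_laplaceExponent (α θ ρ : ℝ) (hα0 : 0 ≤ α) (hα1 : α < 1)
    (hθ : 0 ≤ θ) (hρ : 0 < ρ) (ν : Measure ℝ)
    (hsupp : ν ((Set.Ioc (0:ℝ) 1)ᶜ) = 0)
    (hfin : ∀ x : ℝ, 0 < x → ν (Set.Icc x 1) ≠ ⊤)
    (htail : ∀ x : ℝ, 0 < x → x ≤ 1 →
      (ν (Set.Icc x 1)).toReal = x ^ (-α) * (1 - x) ^ θ) :
    ∫ x in Set.Ioc (0:ℝ) 1, (1 - (1 - x) ^ ρ) ∂ν =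
      ρ * Real.Gamma (1 - α) * Real.Gamma (ρ + θ) / Real.Gamma (ρ + 1 - α + θ) :=
  twoParam_laplaceExponent_general α θ ρ hα1 hθ hρ ν hfin htail
end

section
/- Sliced splitting identity for Laplace exponents: if Φ is the Laplace exponent of a subordinator with Lévy measure ν̃ (and zero drift), then the interrupted subordinator at rate θ > 0 has Laplace exponent Φ_θ(ρ) = (ρ/(ρ+θ)) Φ(ρ+θ), and its Lévy measure satisfies ν̃_θ[y,∞] = e^{−θy} ν̃[y,∞]; moreover these two statements are consistent: the Laplace exponent of the measure with tail e^{−θy} ν̃[y,∞] equals (ρ/(ρ+θ))Φ(ρ+θ). -/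
/-!
Write `1 - e^{-cy} = ∫₀^y c e^{-ct} dt` and swap the integrals (layer cake), so that the
Laplace exponent of a measure `μ` on `(0,∞)` becomes `∫_{t>0} μ[t,∞) c e^{-ct} dt`. For tails
`νθ[t,∞) = e^{-θt} ν[t,∞)` the integrand with `c = ρ` is then `ρ/(ρ+θ)` times the integrand
with `c = ρ + θ`, since `e^{-θt} e^{-ρt} = e^{-(ρ+θ)t}`.
-/

open MeasureTheory Set Real

lemma intervalIntegral_mul_exp_neg_mul (c y : ℝ) :
    ∫ t in (0:ℝ)..y, c * exp (-c * t) = 1 - exp (-c * y) := by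
  have hderiv : ∀ t ∈ uIcc (0:ℝ) y,
      HasDerivAt (fun s => -exp (-c * s)) (c * exp (-c * t)) t := fun t _ =>
    (((hasDerivAt_id' t).const_mul (-c)).exp.neg :
      HasDerivAt (fun s => -exp (-c * s)) _ t).congr_deriv (by ring)
  rw [intervalIntegral.integral_eq_sub_of_hasDerivAt hderiv
    ((by fun_prop : Continuous fun t => c * exp (-c * t)).intervalIntegrable 0 y)]
  simp only [mul_zero, exp_zero]
  ring

lemma one_sub_exp_neg_mul_nonneg {c y : ℝ} (hc : 0 ≤ c) (hy : 0 ≤ y) :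
    0 ≤ 1 - exp (-c * y) := by
  have : exp (-c * y) ≤ 1 := exp_le_one_iff.mpr (by nlinarith)
  linarith

lemma lintegral_one_sub_exp_eq_lintegral_measure_Ici (μ : Measure ℝ) {c : ℝ} (hc : 0 ≤ c) :
    ∫⁻ y in Ioi 0, ENNReal.ofReal (1 - exp (-c * y)) ∂μ
      = ∫⁻ t in Ioi 0, μ (Ici t) * ENNReal.ofReal (c * exp (-c * t)) := by
  have hid_nonneg : 0 ≤ᵐ[μ.restrict (Ioi 0)] (id : ℝ → ℝ) := by
    filter_upwards [ae_restrict_mem measurableSet_Ioi] with y hy using le_of_lt hy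
  have layer_cake := lintegral_comp_eq_lintegral_meas_le_mul (μ.restrict (Ioi 0)) hid_nonneg
    aemeasurable_id
    (fun t _ => (by fun_prop : Continuous fun s => c * exp (-c * s)).intervalIntegrable 0 t)
    (Filter.Eventually.of_forall fun t => by positivity)
  simp only [id, intervalIntegral_mul_exp_neg_mul] at layer_cake
  rw [layer_cake]
  refine setLIntegral_congr_fun measurableSet_Ioi fun t (ht : 0 < t) => ?_
  change μ.restrict (Ioi 0) (Ici t) * _ = _
  rw [Measure.restrict_apply measurableSet_Ici, inter_eq_left.mpr (Ici_subset_Ioi.mpr ht)]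

lemma setIntegral_one_sub_exp_eq_toReal_lintegral_measure_Ici (μ : Measure ℝ) {c : ℝ}
    (hc : 0 ≤ c) :
    ∫ y in Ioi 0, (1 - exp (-c * y)) ∂μ
      = (∫⁻ t in Ioi 0, μ (Ici t) * ENNReal.ofReal (c * exp (-c * t))).toReal := by
  have hnonneg : 0 ≤ᵐ[μ.restrict (Ioi 0)] fun y => 1 - exp (-c * y) := by
    filter_upwards [ae_restrict_mem measurableSet_Ioi] with y (hy : 0 < y)
    exact one_sub_exp_neg_mul_nonneg hc hy.le
  rw [integral_eq_lintegral_of_nonneg_ae hnonneg (by fun_prop),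
    lintegral_one_sub_exp_eq_lintegral_measure_Ici μ hc]

lemma lintegral_measure_Ici_mul_eq_top (μ : Measure ℝ) {c t₀ : ℝ} (hc : 0 < c) (ht₀ : 0 < t₀)
    (htop : μ (Ici t₀) = ⊤) :
    ∫⁻ t in Ioi 0, μ (Ici t) * ENNReal.ofReal (c * exp (-c * t)) = ⊤ := by
  have hinfinite : ∀ t ∈ Ioc 0 t₀, μ (Ici t) * ENNReal.ofReal (c * exp (-c * t)) = ⊤ := by
    intro t ht
    have hμ : μ (Ici t) = ⊤ := top_le_iff.mp (htop ▸ measure_mono (Ici_subset_Ici.mpr ht.2))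
    rw [hμ, ENNReal.top_mul (ENNReal.ofReal_pos.mpr (by positivity)).ne']
  refine top_le_iff.mp (le_trans ?_
    (lintegral_mono_set (Ioc_subset_Ioi_self : Ioc (0:ℝ) t₀ ⊆ Ioi 0)))
  rw [setLIntegral_congr_fun measurableSet_Ioc hinfinite, setLIntegral_const, Real.volume_Ioc,
    ENNReal.top_mul (ENNReal.ofReal_pos.mpr (by linarith)).ne']

section tails

variable {ν νθ : Measure ℝ} {θ : ℝ}
  (hfin : ∀ y : ℝ, 0 < y → ν (Ici y) ≠ ⊤)
  (htail : ∀ y : ℝ, 0 < y → (νθ (Ici y)).toReal = exp (-θ * y) * (ν (Ici y)).toReal)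
include hfin htail

lemma measure_Ici_eq_ofReal_exp_mul {t : ℝ} (ht : 0 < t) (hθfin : νθ (Ici t) ≠ ⊤) :
    νθ (Ici t) = ENNReal.ofReal (exp (-θ * t)) * ν (Ici t) := by
  rw [← ENNReal.ofReal_toReal hθfin, htail t ht, ENNReal.ofReal_mul (exp_pos _).le,
    ENNReal.ofReal_toReal (hfin t ht)]

lemma measure_Ici_eq_zero_of_measure_Ici_eq_top {t₀ : ℝ} (ht₀ : 0 < t₀)
    (htop : νθ (Ici t₀) = ⊤) {t : ℝ} (ht : 0 < t) : ν (Ici t) = 0 := by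
  set s := min t t₀
  have hs : 0 < s := lt_min ht ht₀
  have hθs : νθ (Ici s) = ⊤ :=
    top_le_iff.mp (htop ▸ measure_mono (Ici_subset_Ici.mpr (min_le_right t t₀)))
  have hνs : (ν (Ici s)).toReal = 0 := by
    have h := htail s hs
    rw [hθs, ENNReal.toReal_top, eq_comm, mul_eq_zero] at h
    exact h.resolve_left (exp_pos _).ne'
  have hνs' : ν (Ici s) = 0 := (ENNReal.toReal_eq_zero_iff _).mp hνs |>.resolve_right (hfin s hs)
  exact le_antisymm (hνs' ▸ measure_mono (Ici_subset_Ici.mpr (min_le_left t t₀))) zero_le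

end tails

lemma exp_neg_mul_mul_mul_exp_neg_mul {ρ θ : ℝ} (hσ : ρ + θ ≠ 0) (t : ℝ) :
    exp (-θ * t) * (ρ * exp (-ρ * t)) = ρ / (ρ + θ) * ((ρ + θ) * exp (-(ρ + θ) * t)) := by
  rw [← mul_assoc (ρ / _), div_mul_cancel₀ _ hσ, mul_left_comm, ← exp_add]
  ring_nf

theorem sliced_splitting_laplaceExponent_general (ν νθ : Measure ℝ) (θ ρ : ℝ)
    (hθ : 0 < θ) (hρ : 0 < ρ)
    (hfin : ∀ y : ℝ, 0 < y → ν (Set.Ici y) ≠ ⊤)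
    (htail : ∀ y : ℝ, 0 < y →
      (νθ (Set.Ici y)).toReal = Real.exp (-θ * y) * (ν (Set.Ici y)).toReal) :
    ∫ y in Set.Ioi (0:ℝ), (1 - Real.exp (-ρ * y)) ∂νθ =
      ρ / (ρ + θ) * ∫ y in Set.Ioi (0:ℝ), (1 - Real.exp (-(ρ + θ) * y)) ∂ν := by
  have hσ : 0 < ρ + θ := by linarith
  rw [setIntegral_one_sub_exp_eq_toReal_lintegral_measure_Ici νθ hρ.le,
    setIntegral_one_sub_exp_eq_toReal_lintegral_measure_Ici ν hσ.le]
  by_cases hθfin : ∀ t : ℝ, 0 < t → νθ (Ici t) ≠ ⊤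
  · have hpointwise : ∀ t ∈ Ioi (0:ℝ), νθ (Ici t) * ENNReal.ofReal (ρ * exp (-ρ * t))
        = ENNReal.ofReal (ρ / (ρ + θ))
          * (ν (Ici t) * ENNReal.ofReal ((ρ + θ) * exp (-(ρ + θ) * t))) :=
        fun t (ht : 0 < t) => by
      rw [measure_Ici_eq_ofReal_exp_mul hfin htail ht (hθfin t ht), mul_comm _ (ν _), mul_assoc,
        ← ENNReal.ofReal_mul (exp_pos _).le, exp_neg_mul_mul_mul_exp_neg_mul hσ.ne',
        ENNReal.ofReal_mul (by positivity), mul_left_comm]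
    rw [setLIntegral_congr_fun measurableSet_Ioi hpointwise, lintegral_const_mul' _ _
      ENNReal.ofReal_ne_top, ENNReal.toReal_mul, ENNReal.toReal_ofReal (by positivity)]
  · -- Then `ν` vanishes on `(0,∞)` while the left integral diverges, so both sides are `0`.
    push Not at hθfin
    obtain ⟨t₀, ht₀, htop⟩ := hθfin
    have hν : ∀ t ∈ Ioi (0:ℝ), ν (Ici t) * ENNReal.ofReal ((ρ + θ) * exp (-(ρ + θ) * t)) = 0 :=
      fun t ht => by
        rw [measure_Ici_eq_zero_of_measure_Ici_eq_top hfin htail ht₀ htop ht, zero_mul]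
    rw [lintegral_measure_Ici_mul_eq_top νθ hρ ht₀ htop,
      setLIntegral_congr_fun measurableSet_Ioi hν]
    simp

/-- Sliced-splitting identity for Laplace exponents: if `ν̃_θ` is the Lévy measure
with tail `ν̃_θ[y,∞] = e^{−θy} ν̃[y,∞]` (the Lévy measure of the interrupted
subordinator), then its Laplace exponent satisfies
`∫ (1−e^{−ρy}) ν̃_θ(dy) = (ρ/(ρ+θ)) Φ(ρ+θ)`, where
`Φ(ρ) = ∫ (1−e^{−ρy}) ν̃(dy)`. -/
theorem sliced_splitting_laplaceExponent (ν νθ : Measure ℝ) (θ ρ : ℝ)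
    (hθ : 0 < θ) (hρ : 0 < ρ)
    (hsupp : ν (Set.Iic 0) = 0) (hsuppθ : νθ (Set.Iic 0) = 0)
    (hfin : ∀ y : ℝ, 0 < y → ν (Set.Ici y) ≠ ⊤)
    (htail : ∀ y : ℝ, 0 < y →
      (νθ (Set.Ici y)).toReal = Real.exp (-θ * y) * (ν (Set.Ici y)).toReal)
    (hint : IntegrableOn (fun y => 1 - Real.exp (-y)) (Set.Ioi 0) ν) :
    ∫ y in Set.Ioi (0:ℝ), (1 - Real.exp (-ρ * y)) ∂νθ =
      ρ / (ρ + θ) * ∫ y in Set.Ioi (0:ℝ), (1 - Real.exp (-(ρ + θ) * y)) ∂ν :=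
  sliced_splitting_laplaceExponent_general ν νθ θ ρ hθ hρ hfin htail
end
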